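/- For any pair of integers (m, k) and any M > 0, there exist integers r(G₁) = m and r(G₂) = k realized as turning numbers of axis-parallel polygonal loops G₁, G₂ of equal grid size n, each satisfying the zero-area condition Σᵢ σᵢ·yᵢ·ℓᵢ = 0. -/

import Mathlib

/-- An axis-parallel polygonal grid-diagram loop of grid size `n` in `[0, n]²`: the corners
`c j` (indexed cyclically by `ℤ`, with period `2n`) alternate between horizontal edges
(even `j`) and vertical edges (odd `j`); the `n` horizontal segments lie at distinct
half-integer heights `k + 1/2` with `0 ≤ k < n` (one per row) and the `n` vertical
segments at distinct half-integer positions (one per column). -/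
structure GridLoop (n : ℕ) where
  c : ℤ → ℚ × ℚ
  hn : 0 < n
  periodic : ∀ j, c (j + 2 * n) = c j
  horiz : ∀ j, Even j → (c (j + 1)).2 = (c j).2
  vert : ∀ j, Odd j → (c (j + 1)).1 = (c j).1
  corner : ∀ j, c (j + 1) ≠ c j
  rowHeights : ∀ i : ℤ, 0 ≤ i → i < n → ∃ k : ℕ, k < n ∧ (c (2 * i)).2 = (k : ℚ) + 1 / 2
  colPositions : ∀ i : ℤ, 0 ≤ i → i < n →
    ∃ k : ℕ, k < n ∧ (c (2 * i + 1)).1 = (k : ℚ) + 1 / 2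
  rowsInj : ∀ i i' : ℤ, 0 ≤ i → i < n → 0 ≤ i' → i' < n →
    (c (2 * i)).2 = (c (2 * i')).2 → i = i'
  colsInj : ∀ i i' : ℤ, 0 ≤ i → i < n → 0 ≤ i' → i' < n →
    (c (2 * i + 1)).1 = (c (2 * i' + 1)).1 → i = i'

/-- The turning sign `η` of a corner with incoming edge direction `u` and outgoing edge
direction `v`: `+1` for a counterclockwise corner, `−1` for a clockwise one. -/
def turnSign (u v : ℚ × ℚ) : ℚ :=
  if 0 < u.1 * v.2 - u.2 * v.1 then 1 else -1

/-- The turning number `(1/4)·(#ccw corners − #cw corners)` of a grid loop. -/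
def turningNumber {n : ℕ} (G : GridLoop n) : ℚ :=
  (1 / 4) * ∑ j ∈ Finset.range (2 * n),
    turnSign (G.c (j + 1) - G.c j) (G.c (j + 2) - G.c (j + 1))

/-- The signed area sum `Σᵢ σᵢ·yᵢ·ℓᵢ` of a grid loop, where for the horizontal segment in
row `i`, `yᵢ` is its height and `σᵢ·ℓᵢ` its signed horizontal displacement. -/
def signedArea {n : ℕ} (G : GridLoop n) : ℚ :=
  ∑ i ∈ Finset.range n, (G.c (2 * i)).2 * ((G.c (2 * i + 1)).1 - (G.c (2 * i)).1)


/-!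
Two permutations `f`, `g` of `{0, …, N - 1}` describe a grid loop through the points
`(f i + 1/2, g i + 1/2)`, each reached from the previous one horizontally first. Its signed area
is `Σ g i * (f (i+1) - f i)`, and its turning number is `¼ Σ sgn Δg i * (sgn Δf i - sgn Δf (i+1))`:
only the indices where the horizontal direction reverses contribute, by `±½` each.

With `N = 2s + 1`, taking `f = id` and for `g` the transposition of `s` and `N - 1` gives turning
number `0` and area `0`. For `m ≥ 1`, let `f` be the identity on `[0, X]` followed by `m` exchanged
adjacent pairs, and let `g` agree with `f` except for the free values `u = g X` and `H = g (N - 1)`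
(the two displaced values move to the positions `u` and `H`). Each pair becomes a small curl of
turning number `1`, and the area is `N(N-1)/2 + u - 2m - 2N + 4 - (N-1)H`, which vanishes for
`H = s - 1`, `u = s + 2m - 2`. Mirroring in a vertical line negates turning number and area. All of
this fits into one size `2s + 1` as soon as `s ≥ 4 max(|m|, |k|)`.
-/

open Finset

namespace GridLoop

section Periodize

def IsPermOn (N : ℕ) (f : ℤ → ℤ) : Prop :=
  (∀ i : ℤ, 0 ≤ i → i < N → 0 ≤ f i ∧ f i < N) ∧
    ∀ i j : ℤ, 0 ≤ i → i < N → 0 ≤ j → j < N → f i = f j → i = j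

def periodize (N : ℕ) (f : ℤ → ℤ) (i : ℤ) : ℤ := f (i % N)

def step (N : ℕ) (f : ℤ → ℤ) (i : ℤ) : ℤ := periodize N f (i + 1) - periodize N f i

variable {N : ℕ} {f : ℤ → ℤ}

lemma periodize_of_mem {i : ℤ} (h0 : 0 ≤ i) (h1 : i < N) : periodize N f i = f i := by
  rw [periodize, Int.emod_eq_of_lt h0 h1]

lemma periodize_add_self (i : ℤ) : periodize N f (i + N) = periodize N f i := by
  simp [periodize]

lemma periodize_succ_of_mem {i : ℤ} (h0 : 0 ≤ i) (h1 : i < N) :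
    periodize N f (i + 1) = if i + 1 < N then f (i + 1) else f 0 := by
  split_ifs with h
  · exact periodize_of_mem (by omega) h
  · rw [show i + 1 = 0 + N by omega, periodize_add_self, periodize_of_mem le_rfl (by omega)]

lemma step_add_self (i : ℤ) : step N f (i + N) = step N f i := by
  rw [step, step, add_right_comm, periodize_add_self, periodize_add_self]

lemma step_self : step N f N = step N f 0 := by
  simpa using step_add_self (N := N) (f := f) 0

lemma step_of_lt {i : ℤ} (h0 : 0 ≤ i) (h : i + 1 < N) : step N f i = f (i + 1) - f i := by
  rw [step, periodize_of_mem (by omega) h, periodize_of_mem h0 (by omega)]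

lemma step_of_eq {i : ℤ} (h0 : 0 ≤ i) (h : i + 1 = N) : step N f i = f 0 - f i := by
  rw [step, periodize_of_mem h0 (by omega), h, ← zero_add (N : ℤ), periodize_add_self,
    periodize_of_mem le_rfl (by omega)]

lemma sum_step_eq_zero : ∑ i ∈ range N, (step N f i : ℚ) = 0 := by
  have h := sum_range_sub (fun i : ℕ => (periodize N f i : ℚ)) N
  simp only [step, Int.cast_sub, Nat.cast_add, Nat.cast_one] at h ⊢
  rw [h, ← zero_add (N : ℤ), Nat.cast_zero, periodize_add_self, sub_self]

lemma IsPermOn.periodize_mem (hf : IsPermOn N f) (hN : 0 < N) (i : ℤ) :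
    0 ≤ periodize N f i ∧ periodize N f i < N :=
  hf.1 _ (Int.emod_nonneg _ (by omega)) (Int.emod_lt_of_pos _ (by omega))

lemma IsPermOn.periodize_succ_ne (hf : IsPermOn N f) (hN : 2 ≤ N) (i : ℤ) :
    periodize N f (i + 1) ≠ periodize N f i := by
  have h0 : 0 ≤ i % N := Int.emod_nonneg _ (by omega)
  have h1 : i % N < N := Int.emod_lt_of_pos _ (by omega)
  have hsucc : periodize N f (i + 1) = periodize N f (i % N + 1) := by
    simp [periodize, Int.emod_add_emod]
  rw [hsucc, periodize_succ_of_mem h0 h1, periodize]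
  intro h
  split_ifs at h with hlt
  · have := hf.2 _ _ (by omega) hlt h0 h1 h; omega
  · have := hf.2 _ _ le_rfl (by omega) h0 h1 h; omega

lemma IsPermOn.step_ne_zero (hf : IsPermOn N f) (hN : 2 ≤ N) (i : ℤ) : step N f i ≠ 0 :=
  sub_ne_zero.mpr (hf.periodize_succ_ne hN i)

lemma IsPermOn.sum_range (hf : IsPermOn N f) : ∑ i ∈ range N, (f i : ℚ) = N * (N - 1) / 2 := by
  set e : ℕ → ℕ := fun i => (f i).toNat
  have hmem : ∀ i ∈ range N, 0 ≤ f i ∧ f i < N := fun i hi =>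
    hf.1 i (by positivity) (by exact_mod_cast mem_range.mp hi)
  have hinj : Set.InjOn e (range N) := by
    intro i hi j hj hij
    have h := hf.2 i j (by positivity) (by exact_mod_cast mem_range.mp hi) (by positivity)
      (by exact_mod_cast mem_range.mp hj)
      (by have := hmem i hi; have := hmem j hj; simp only [e] at hij; omega)
    exact_mod_cast h
  have himage : (range N).image e = range N :=
    eq_of_subset_of_card_le
      (fun v hv => by
        obtain ⟨i, hi, rfl⟩ := mem_image.mp hv
        have := hmem i hi
        exact mem_range.mpr (by simp only [e]; omega))
      (card_image_of_injOn hinj).ge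
  calc ∑ i ∈ range N, (f i : ℚ) = ∑ i ∈ range N, ((e i : ℕ) : ℚ) := by
        refine sum_congr rfl fun i hi => ?_
        simp only [e]
        exact_mod_cast (Int.toNat_of_nonneg (hmem i hi).1).symm
    _ = ∑ v ∈ range N, (v : ℚ) := by rw [← sum_image hinj, himage]
    _ = N * (N - 1) / 2 := by
        rcases Nat.eq_zero_or_pos N with rfl | hN
        · simp
        have h : ((∑ i ∈ range N, i : ℕ) : ℚ) * 2 = N * (N - 1) := by
          rw [← Nat.cast_ofNat, ← Nat.cast_mul, sum_range_id_mul_two]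
          push_cast [Nat.cast_sub (by omega : 1 ≤ N)]
          ring
        push_cast at h
        linarith

lemma IsPermOn.swap_comp (hf : IsPermOn N f) {a b : ℤ} (ha : 0 ≤ a ∧ a < N)
    (hb : 0 ≤ b ∧ b < N) : IsPermOn N (Equiv.swap a b ∘ f) := by
  refine ⟨fun i h0 h1 => ?_, fun i j h0 h1 h0' h1' h =>
    hf.2 i j h0 h1 h0' h1' ((Equiv.swap a b).injective h)⟩
  have := hf.1 i h0 h1
  simp only [Function.comp_apply, Equiv.swap_apply_def]
  split_ifs <;> omega

lemma isPermOn_id (N : ℕ) : IsPermOn N id :=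
  ⟨fun _ h0 h1 => ⟨h0, h1⟩, fun _ _ _ _ _ _ h => h⟩

lemma step_id {i : ℤ} (h0 : 0 ≤ i) (h1 : i < N) :
    step N id i = if i + 1 < N then 1 else 1 - (N : ℤ) := by
  split_ifs with h
  · rw [step_of_lt h0 h, id, id]; ring
  · rw [step_of_eq h0 (by omega), id, id]; omega

end Periodize

lemma sum_range_two_mul {M : Type*} [AddCommMonoid M] (h : ℕ → M) (n : ℕ) :
    ∑ j ∈ range (2 * n), h j = ∑ i ∈ range n, (h (2 * i) + h (2 * i + 1)) := by
  induction n with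
  | zero => simp
  | succ n ih =>
    rw [mul_add, mul_one, sum_range_succ, sum_range_succ, sum_range_succ, ih, add_assoc]

lemma sum_range_eq_last_two {M : Type*} [AddCommMonoid M] {N : ℕ} (hN : 2 ≤ N) (h : ℕ → M)
    (hz : ∀ i < N - 2, h i = 0) : ∑ i ∈ range N, h i = h (N - 2) + h (N - 1) := by
  rw [show range N = range (N - 2 + 1 + 1) by congr 1; omega, sum_range_succ, sum_range_succ,
    sum_eq_zero fun i hi => hz i (mem_range.mp hi), zero_add, show N - 2 + 1 = N - 1 by omega]

section OfPerm

/-- Integer division rounds down, so the corners `2i` and `2i + 1` are `(f i, g i)` and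
`(f (i + 1), g i)`, shifted by `1/2`. -/
def corners (N : ℕ) (f g : ℤ → ℤ) (j : ℤ) : ℚ × ℚ :=
  ((periodize N f ((j + 1) / 2) : ℚ) + 1 / 2, (periodize N g (j / 2) : ℚ) + 1 / 2)

variable {N : ℕ} {f g : ℤ → ℤ}

lemma corners_two_mul (i : ℤ) :
    corners N f g (2 * i) = ((periodize N f i : ℚ) + 1 / 2, (periodize N g i : ℚ) + 1 / 2) := by
  rw [corners, show (2 * i + 1) / 2 = i by omega, show 2 * i / 2 = i by omega]

lemma corners_two_mul_add_one (i : ℤ) :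
    corners N f g (2 * i + 1) =
      ((periodize N f (i + 1) : ℚ) + 1 / 2, (periodize N g i : ℚ) + 1 / 2) := by
  rw [corners, show (2 * i + 1 + 1) / 2 = i + 1 by omega, show (2 * i + 1) / 2 = i by omega]

lemma intCast_add_half_inj {a b : ℤ} (h : (a : ℚ) + 1 / 2 = b + 1 / 2) : a = b := by
  exact_mod_cast add_right_cancel h

lemma exists_natCast_add_half {a : ℤ} (h : 0 ≤ a ∧ a < N) :
    ∃ k : ℕ, k < N ∧ (a : ℚ) + 1 / 2 = (k : ℚ) + 1 / 2 :=
  ⟨a.toNat, by omega, by rw [← Int.toNat_of_nonneg h.1]; norm_cast⟩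

def ofPerm (N : ℕ) (hN : 2 ≤ N) (f g : ℤ → ℤ) (hf : IsPermOn N f) (hg : IsPermOn N g) :
    GridLoop N where
  c := corners N f g
  hn := by omega
  periodic j := by
    rw [corners, corners, show (j + 2 * N + 1) / 2 = (j + 1) / 2 + N by omega,
      show (j + 2 * N) / 2 = j / 2 + N by omega, periodize_add_self, periodize_add_self]
  horiz j hj := by
    obtain ⟨i, rfl⟩ := hj
    rw [← two_mul, corners_two_mul_add_one, corners_two_mul]
  vert j hj := by
    obtain ⟨i, rfl⟩ := hj
    rw [show 2 * i + 1 + 1 = 2 * (i + 1) by ring, corners_two_mul, corners_two_mul_add_one]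
  corner j h := by
    obtain ⟨i, rfl | rfl⟩ := Int.even_or_odd' j
    · rw [corners_two_mul_add_one, corners_two_mul] at h
      exact hf.periodize_succ_ne hN i (intCast_add_half_inj (congrArg Prod.fst h))
    · rw [show 2 * i + 1 + 1 = 2 * (i + 1) by ring, corners_two_mul,
        corners_two_mul_add_one] at h
      exact hg.periodize_succ_ne hN i (intCast_add_half_inj (congrArg Prod.snd h))
  rowHeights i _ _ := by
    rw [corners_two_mul]
    exact exists_natCast_add_half (hg.periodize_mem (by omega) i)
  colPositions i _ _ := by
    rw [corners_two_mul_add_one]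
    exact exists_natCast_add_half (hf.periodize_mem (by omega) (i + 1))
  rowsInj i i' h0 h1 h0' h1' h := by
    rw [corners_two_mul, corners_two_mul, periodize_of_mem (f := g) h0 h1,
      periodize_of_mem (f := g) h0' h1'] at h
    exact hg.2 i i' h0 h1 h0' h1' (intCast_add_half_inj h)
  colsInj i i' h0 h1 h0' h1' h := by
    rw [corners_two_mul_add_one, corners_two_mul_add_one, periodize_succ_of_mem h0 h1,
      periodize_succ_of_mem h0' h1'] at h
    have h := intCast_add_half_inj h
    split_ifs at h <;>
      · have := hf.2 _ _ (by omega) (by omega) (by omega) (by omega) h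
        omega

lemma corners_horizontal_edge (i : ℤ) :
    corners N f g (2 * i + 1) - corners N f g (2 * i) = ((step N f i : ℚ), 0) := by
  rw [corners_two_mul_add_one, corners_two_mul, step]; ext <;> simp

lemma corners_vertical_edge (i : ℤ) :
    corners N f g (2 * (i + 1)) - corners N f g (2 * i + 1) = (0, (step N g i : ℚ)) := by
  rw [corners_two_mul, corners_two_mul_add_one, step]; ext <;> simp

end OfPerm

lemma turnSign_eq_sign {u v : ℚ × ℚ} {x : ℤ} (h : u.1 * v.2 - u.2 * v.1 = x) (hx : x ≠ 0) :
    turnSign u v = x.sign := by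
  rw [turnSign, h]
  rcases hx.lt_or_gt with hx | hx
  · rw [if_neg (by exact_mod_cast hx.not_gt), Int.sign_eq_neg_one_of_neg hx]; norm_num
  · rw [if_pos (by exact_mod_cast hx), Int.sign_eq_one_of_pos hx]; norm_num

def turnTerm (N : ℕ) (f g : ℤ → ℤ) (i : ℤ) : ℤ :=
  (step N g i).sign * ((step N f i).sign - (step N f (i + 1)).sign)

def areaTerm (N : ℕ) (f g : ℤ → ℤ) (i : ℤ) : ℚ := g i * (step N f i - 1)

section Formulas

variable {N : ℕ} {f g : ℤ → ℤ}

lemma turnSign_add_turnSign_eq_turnTerm (hN : 2 ≤ N) (hf : IsPermOn N f) (hg : IsPermOn N g)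
    (i : ℤ) :
    turnSign (corners N f g (2 * i + 1) - corners N f g (2 * i))
        (corners N f g (2 * i + 2) - corners N f g (2 * i + 1)) +
      turnSign (corners N f g (2 * i + 1 + 1) - corners N f g (2 * i + 1))
        (corners N f g (2 * i + 1 + 2) - corners N f g (2 * i + 1 + 1)) =
      turnTerm N f g i := by
  have hfi := hf.step_ne_zero hN i
  have hfi' := hf.step_ne_zero hN (i + 1)
  have hgi := hg.step_ne_zero hN i
  rw [show 2 * i + 1 + 1 = 2 * (i + 1) by ring, show 2 * i + 1 + 2 = 2 * (i + 1) + 1 by ring,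
    show 2 * i + 2 = 2 * (i + 1) by ring, corners_horizontal_edge, corners_vertical_edge,
    corners_horizontal_edge,
    turnSign_eq_sign (x := step N f i * step N g i) (by push_cast; ring) (mul_ne_zero hfi hgi),
    turnSign_eq_sign (x := -(step N g i * step N f (i + 1))) (by push_cast; ring)
      (neg_ne_zero.mpr (mul_ne_zero hgi hfi')), turnTerm]
  push_cast [Int.sign_mul, Int.sign_neg]
  ring

variable {hN : 2 ≤ N} {hf : IsPermOn N f} {hg : IsPermOn N g}

theorem turningNumber_ofPerm :
    turningNumber (ofPerm N hN f g hf hg) = (∑ i ∈ range N, turnTerm N f g i : ℤ) / 4 := by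
  rw [turningNumber, sum_range_two_mul, Int.cast_sum, one_div_mul_eq_div]
  congr 1
  refine sum_congr rfl fun i _ => ?_
  push_cast
  exact turnSign_add_turnSign_eq_turnTerm hN hf hg i

theorem signedArea_ofPerm :
    signedArea (ofPerm N hN f g hf hg) = N * (N - 1) / 2 + ∑ i ∈ range N, areaTerm N f g i := by
  have hterm : ∀ i ∈ range N, (corners N f g (2 * i)).2 *
      ((corners N f g (2 * i + 1)).1 - (corners N f g (2 * i)).1) =
      areaTerm N f g i + g i + step N f i / 2 := by
    intro i hi
    rw [corners_two_mul_add_one, corners_two_mul, areaTerm, step,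
      periodize_of_mem (f := g) (by positivity) (by exact_mod_cast mem_range.mp hi)]
    push_cast; ring
  rw [signedArea, show (ofPerm N hN f g hf hg).c = corners N f g from rfl, sum_congr rfl hterm,
    sum_add_distrib, sum_add_distrib, ← sum_div, sum_step_eq_zero, hg.sum_range]
  ring

end Formulas

section TurnTerm

variable {N : ℕ} {f g : ℤ → ℤ} {i : ℤ}

lemma turnTerm_of_sign_eq (h : (step N f i).sign = (step N f (i + 1)).sign) :
    turnTerm N f g i = 0 := by
  rw [turnTerm, h, sub_self, mul_zero]

lemma turnTerm_of_right_turnaround (h : 0 < step N f i) (h' : step N f (i + 1) < 0) :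
    turnTerm N f g i = 2 * (step N g i).sign := by
  rw [turnTerm, Int.sign_eq_one_of_pos h, Int.sign_eq_neg_one_of_neg h']; ring

lemma turnTerm_of_left_turnaround (h : step N f i < 0) (h' : 0 < step N f (i + 1)) :
    turnTerm N f g i = -2 * (step N g i).sign := by
  rw [turnTerm, Int.sign_eq_neg_one_of_neg h, Int.sign_eq_one_of_pos h']; ring

end TurnTerm

section Reflect

variable {n : ℕ}

lemma cross_ne_zero (G : GridLoop n) (j : ℤ) :
    (G.c (j + 1) - G.c j).1 * (G.c (j + 2) - G.c (j + 1)).2 -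
      (G.c (j + 1) - G.c j).2 * (G.c (j + 2) - G.c (j + 1)).1 ≠ 0 := by
  have hne : ∀ k, G.c (k + 1) ≠ G.c k := G.corner
  rw [show j + 2 = j + 1 + 1 by ring]
  rcases Int.even_or_odd j with hj | hj
  · have h₀ := G.horiz j hj
    have h₁ := G.vert (j + 1) hj.add_one
    have a : (G.c (j + 1)).1 ≠ (G.c j).1 := fun h => hne j (Prod.ext h h₀)
    have b : (G.c (j + 1 + 1)).2 ≠ (G.c (j + 1)).2 := fun h => hne (j + 1) (Prod.ext h₁ h)
    rw [Prod.fst_sub, Prod.snd_sub, Prod.snd_sub, Prod.fst_sub, sub_eq_zero.mpr h₁, mul_zero,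
      sub_zero]
    exact mul_ne_zero (sub_ne_zero.mpr a) (sub_ne_zero.mpr b)
  · have h₀ := G.vert j hj
    have h₁ := G.horiz (j + 1) hj.add_one
    have a : (G.c (j + 1)).2 ≠ (G.c j).2 := fun h => hne j (Prod.ext h₀ h)
    have b : (G.c (j + 1 + 1)).1 ≠ (G.c (j + 1)).1 := fun h => hne (j + 1) (Prod.ext h h₁)
    rw [Prod.fst_sub, Prod.snd_sub, Prod.snd_sub, Prod.fst_sub, sub_eq_zero.mpr h₀, zero_mul,
      zero_sub]
    exact neg_ne_zero.mpr (mul_ne_zero (sub_ne_zero.mpr a) (sub_ne_zero.mpr b))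

lemma turnSign_reflect {u v : ℚ × ℚ} (h : u.1 * v.2 - u.2 * v.1 ≠ 0) :
    turnSign (-u.1, u.2) (-v.1, v.2) = -turnSign u v := by
  simp only [turnSign]
  rcases h.lt_or_gt with h | h
  · rw [if_pos (by linarith), if_neg (by linarith)]; norm_num
  · rw [if_neg (by linarith), if_pos (by linarith)]

def reflect (G : GridLoop n) : GridLoop n where
  c j := (n - (G.c j).1, (G.c j).2)
  hn := G.hn
  periodic j := by rw [G.periodic]
  horiz j hj := G.horiz j hj
  vert j hj := by simp only [G.vert j hj]
  corner j h := by
    simp only [Prod.mk.injEq, sub_right_inj] at h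
    exact G.corner j (Prod.ext h.1 h.2)
  rowHeights := G.rowHeights
  colPositions i h0 h1 := by
    obtain ⟨k, hk, hc⟩ := G.colPositions i h0 h1
    refine ⟨n - 1 - k, by omega, ?_⟩
    rw [hc, Nat.cast_sub (by omega), Nat.cast_sub (by omega)]
    ring
  rowsInj := G.rowsInj
  colsInj i i' h0 h1 h0' h1' h := G.colsInj i i' h0 h1 h0' h1' (by simpa using h)

lemma reflect_c (G : GridLoop n) (j : ℤ) : G.reflect.c j = (n - (G.c j).1, (G.c j).2) := rfl

theorem turningNumber_reflect (G : GridLoop n) : turningNumber G.reflect = -turningNumber G := by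
  simp only [turningNumber, ← mul_neg, ← sum_neg_distrib]
  congr 1
  refine sum_congr rfl fun j _ => ?_
  rw [← turnSign_reflect (G.cross_ne_zero j)]
  congr 1 <;> ext <;> simp [reflect_c]

theorem signedArea_reflect (G : GridLoop n) : signedArea G.reflect = -signedArea G := by
  simp only [signedArea, ← sum_neg_distrib, reflect_c]
  refine sum_congr rfl fun i _ => ?_
  ring

end Reflect

section FigureEight

variable {N : ℕ} {s : ℤ}

def figureEightY (N : ℕ) (s : ℤ) : ℤ → ℤ := Equiv.swap s ((N : ℤ) - 1)

lemma isPermOn_figureEightY (hN : (N : ℤ) = 2 * s + 1) (hs : 1 ≤ s) :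
    IsPermOn N (figureEightY N s) :=
  (isPermOn_id N).swap_comp (by omega) (by omega)

lemma sum_turnTerm_figureEight (hN : (N : ℤ) = 2 * s + 1) (hs : 1 ≤ s) :
    ∑ i ∈ range N, turnTerm N id (figureEightY N s) i = 0 := by
  have hg : ∀ i, figureEightY N s i = if i = s then (N : ℤ) - 1 else if i = N - 1 then s else i :=
    fun i => Equiv.swap_apply_def _ _ _
  have hstep : ∀ i : ℤ, 0 ≤ i → i < N → step N id i = if i + 1 < N then 1 else 1 - (N : ℤ) :=
    fun i h0 h1 => step_id h0 h1
  rw [sum_range_eq_last_two (by omega) _ fun i hi => ?_]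
  · push_cast [Nat.cast_sub (show 2 ≤ N by omega), Nat.cast_sub (show 1 ≤ N by omega)]
    rw [turnTerm_of_right_turnaround (by rw [hstep _ (by omega) (by omega)]; split_ifs <;> omega)
        (by rw [hstep _ (by omega) (by omega)]; split_ifs <;> omega),
      turnTerm_of_left_turnaround (by rw [hstep _ (by omega) (by omega)]; split_ifs <;> omega)
        (by rw [show (N : ℤ) - 1 + 1 = N by ring, step_self, hstep _ le_rfl (by omega)]
            split_ifs <;> omega),
      Int.sign_eq_neg_one_of_neg
        (by rw [step_of_lt (by omega) (by omega), hg, hg]; split_ifs <;> omega),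
      Int.sign_eq_neg_one_of_neg
        (by rw [step_of_eq (by omega) (by omega), hg, hg]; split_ifs <;> omega)]
    norm_num
  · refine turnTerm_of_sign_eq ?_
    rw [hstep _ (by omega) (by omega), hstep _ (by omega) (by omega), if_pos (by omega),
      if_pos (by omega)]

lemma sum_areaTerm_figureEight (hN : (N : ℤ) = 2 * s + 1) (hs : 1 ≤ s) :
    ∑ i ∈ range N, areaTerm N id (figureEightY N s) i = -N * s := by
  rw [sum_range_eq_last_two (by omega) _ fun i hi => ?_]
  · push_cast [Nat.cast_sub (show 2 ≤ N by omega), Nat.cast_sub (show 1 ≤ N by omega)]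
    rw [areaTerm, areaTerm, step_id (by omega) (by omega), step_id (by omega) (by omega),
      if_pos (by omega), if_neg (by omega), figureEightY, Equiv.swap_apply_right]
    push_cast; ring
  · rw [areaTerm, step_id (by omega) (by omega), if_pos (by omega)]; simp

end FigureEight

end GridLoop

namespace GridLoop

section Curls

variable {N X m : ℕ} {u H : ℤ}

def curlsX (X : ℕ) (i : ℤ) : ℤ :=
  if i ≤ X then i else if (i - X) % 2 = 1 then i + 1 else i - 1

def curlsY (N X : ℕ) (u H : ℤ) : ℤ → ℤ :=
  Equiv.swap u (X : ℤ) ∘ Equiv.swap H ((N : ℤ) - 2) ∘ curlsX X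

lemma isPermOn_curlsX (hN : N = X + 2 * m + 1) : IsPermOn N (curlsX X) := by
  subst hN
  constructor
  · intro i h0 h1
    simp only [curlsX]
    split_ifs <;> push_cast at h1 ⊢ <;> omega
  · intro i j h0 h1 h0' h1' h
    simp only [curlsX] at h
    split_ifs at h <;> push_cast at h1 h1' <;> omega

lemma isPermOn_curlsY (hN : N = X + 2 * m + 1) (hm : 1 ≤ m) (hH : 1 ≤ H) (hu : u < X)
    (hHu : H < u) : IsPermOn N (curlsY N X u H) :=
  ((isPermOn_curlsX hN).swap_comp (a := H) (b := (N : ℤ) - 2) ⟨by omega, by omega⟩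
    ⟨by omega, by omega⟩).swap_comp (a := u) (b := X) ⟨by omega, by omega⟩ ⟨by omega, by omega⟩

lemma step_curlsX_of_lt (hN : N = X + 2 * m + 1) {i : ℤ} (h0 : 0 ≤ i) (h : i < X) :
    step N (curlsX X) i = 1 := by
  rw [step_of_lt h0 (by omega)]
  simp only [curlsX]
  split_ifs <;> omega

lemma step_curlsX_X (hN : N = X + 2 * m + 1) (hm : 1 ≤ m) : step N (curlsX X) X = 2 := by
  rw [step_of_lt (by omega) (by omega)]
  simp only [curlsX]
  split_ifs <;> omega

lemma step_curlsX_of_odd {i : ℤ} (h : X < i) (h' : i + 1 < N) (hi : (i - X) % 2 = 1) :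
    step N (curlsX X) i = -1 := by
  rw [step_of_lt (by omega) h']
  simp only [curlsX]
  split_ifs <;> omega

lemma step_curlsX_of_even {i : ℤ} (h : X < i) (h' : i + 1 < N) (hi : (i - X) % 2 = 0) :
    step N (curlsX X) i = 3 := by
  rw [step_of_lt (by omega) h']
  simp only [curlsX]
  split_ifs <;> omega

lemma step_curlsX_last (hN : N = X + 2 * m + 1) (hm : 1 ≤ m) :
    step N (curlsX X) (N - 1) = 2 - (N : ℤ) := by
  rw [step_of_eq (by omega) (by ring)]
  simp only [curlsX]
  split_ifs <;> omega

lemma step_curlsX_self (hN : N = X + 2 * m + 1) (hm : 1 ≤ m) (hX : 1 ≤ X) :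
    step N (curlsX X) N = 1 := by
  rw [step_self, step_of_lt le_rfl (by omega)]
  simp only [curlsX]
  split_ifs <;> omega

lemma curlsY_apply_X (hN : N = X + 2 * m + 1) (hu : u < X) (hHu : H < u) :
    curlsY N X u H X = u := by
  simp only [curlsY, Function.comp_apply, Equiv.swap_apply_def, curlsX]
  split_ifs <;> omega

lemma curlsY_apply_last (hN : N = X + 2 * m + 1) (hm : 1 ≤ m) (hu : u < X) (hHu : H < u) :
    curlsY N X u H (N - 1) = H := by
  simp only [curlsY, Function.comp_apply, Equiv.swap_apply_def, curlsX]
  split_ifs <;> omega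

lemma curlsY_apply_zero (hN : N = X + 2 * m + 1) (hm : 1 ≤ m) (hH : 1 ≤ H) (hu : u < X)
    (hHu : H < u) : curlsY N X u H 0 = 0 := by
  simp only [curlsY, Function.comp_apply, Equiv.swap_apply_def, curlsX]
  split_ifs <;> omega

lemma curlsY_apply_of_lt (hN : N = X + 2 * m + 1) (hu : u < X) (hHu : H < u) {i : ℤ}
    (h : X < i) (h' : i + 1 < N) : curlsY N X u H i = curlsX X i := by
  simp only [curlsY, Function.comp_apply, Equiv.swap_apply_def, curlsX]
  split_ifs <;> omega

lemma turnTerm_curls_of_lt (hN : N = X + 2 * m + 1) (hm : 1 ≤ m) {i : ℤ} (h0 : 0 ≤ i)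
    (h : i < X) : turnTerm N (curlsX X) (curlsY N X u H) i = 0 := by
  refine turnTerm_of_sign_eq ?_
  rw [step_curlsX_of_lt hN h0 h]
  rcases (show i + 1 < X ∨ i + 1 = X by omega) with h' | h'
  · rw [step_curlsX_of_lt hN (by omega) h']
  · rw [h', step_curlsX_X hN hm]; rfl

lemma turnTerm_curls_X (hN : N = X + 2 * m + 1) (hm : 1 ≤ m) (hu : u < X) (hHu : H < u) :
    turnTerm N (curlsX X) (curlsY N X u H) X = 2 := by
  have hg : step N (curlsY N X u H) X = X + 2 - u := by
    rw [step_of_lt (by omega) (by omega), curlsY_apply_X hN hu hHu,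
      curlsY_apply_of_lt hN hu hHu (by omega) (by omega)]
    simp only [curlsX]
    split_ifs <;> omega
  rw [turnTerm_of_right_turnaround (by rw [step_curlsX_X hN hm]; omega)
    (by rw [step_curlsX_of_odd (by omega) (by omega) (by omega)]; omega), hg,
    Int.sign_eq_one_of_pos (by omega)]
  rfl

lemma turnTerm_curls_of_gt (hN : N = X + 2 * m + 1) (hu : u < X) (hHu : H < u) {i : ℤ}
    (h : X < i) (h' : i + 2 < N) : turnTerm N (curlsX X) (curlsY N X u H) i = 2 := by
  have hg : step N (curlsY N X u H) i = step N (curlsX X) i := by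
    rw [step_of_lt (by omega) (by omega), step_of_lt (by omega) (by omega),
      curlsY_apply_of_lt hN hu hHu h (by omega), curlsY_apply_of_lt hN hu hHu (by omega) (by omega)]
  rcases Int.emod_two_eq (i - X) with hi | hi
  · rw [turnTerm_of_right_turnaround (by rw [step_curlsX_of_even h (by omega) hi]; omega)
      (by rw [step_curlsX_of_odd (by omega) (by omega) (by omega)]; omega), hg,
      step_curlsX_of_even h (by omega) hi]
    rfl
  · rw [turnTerm_of_left_turnaround (by rw [step_curlsX_of_odd h (by omega) hi]; omega)
      (by rw [step_curlsX_of_even (by omega) (by omega) (by omega)]; omega), hg,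
      step_curlsX_of_odd h (by omega) hi]
    rfl

lemma turnTerm_curls_last (hN : N = X + 2 * m + 1) (hm : 1 ≤ m) (hH : 1 ≤ H) (hu : u < X)
    (hHu : H < u) : turnTerm N (curlsX X) (curlsY N X u H) (N - 1) = 2 := by
  have hg : step N (curlsY N X u H) (N - 1) = -H := by
    rw [step_of_eq (by omega) (by ring), curlsY_apply_zero hN hm hH hu hHu,
      curlsY_apply_last hN hm hu hHu, zero_sub]
  rw [turnTerm_of_left_turnaround (by rw [step_curlsX_last hN hm]; omega)
    (by rw [sub_add_cancel, step_curlsX_self hN hm (by omega)]; omega), hg,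
    Int.sign_eq_neg_one_of_neg (by omega)]
  rfl

lemma turnTerm_curls (hN : N = X + 2 * m + 1) (hm : 1 ≤ m) (hH : 1 ≤ H) (hu : u < X)
    (hHu : H < u) {i : ℤ} (h0 : 0 ≤ i) (hi : i < N) :
    turnTerm N (curlsX X) (curlsY N X u H) i = if X ≤ i ∧ i + 2 ≠ N then 2 else 0 := by
  rcases lt_trichotomy i X with hiX | rfl | hiX
  · rw [if_neg (by omega), turnTerm_curls_of_lt hN hm h0 hiX]
  · rw [if_pos (by omega), turnTerm_curls_X hN hm hu hHu]
  rcases lt_trichotomy (i + 2) N with hiN | hiN | hiN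
  · rw [if_pos (by omega), turnTerm_curls_of_gt hN hu hHu hiX hiN]
  · rw [if_neg (by omega), turnTerm_of_sign_eq]
    rw [step_curlsX_of_odd hiX (by omega) (by omega), show i + 1 = N - 1 by omega,
      step_curlsX_last hN hm, Int.sign_eq_neg_one_of_neg (show 2 - (N : ℤ) < 0 by omega)]
    rfl
  · rw [if_pos (by omega), show i = N - 1 by omega, turnTerm_curls_last hN hm hH hu hHu]

lemma sum_turnTerm_curls (hN : N = X + 2 * m + 1) (hm : 1 ≤ m) (hH : 1 ≤ H) (hu : u < X)
    (hHu : H < u) : ∑ i ∈ range N, turnTerm N (curlsX X) (curlsY N X u H) i = 4 * m := by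
  have hfilter : (range N).filter (fun i : ℕ => (X : ℤ) ≤ i ∧ (i : ℤ) + 2 ≠ N) =
      (Ico X N).erase (N - 2) := by
    ext i; simp only [mem_filter, mem_range, mem_erase, mem_Ico]; omega
  rw [sum_congr rfl fun i hi => turnTerm_curls hN hm hH hu hHu (Nat.cast_nonneg i)
      (by exact_mod_cast mem_range.mp hi), sum_ite, sum_const_zero, add_zero, sum_const, hfilter,
    card_erase_of_mem (mem_Ico.mpr (by omega)), Nat.card_Ico, nsmul_eq_mul]
  omega

lemma areaTerm_curls_of_lt (hN : N = X + 2 * m + 1) {i : ℤ} (h0 : 0 ≤ i) (h : i < X) :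
    areaTerm N (curlsX X) (curlsY N X u H) i = 0 := by
  rw [areaTerm, step_curlsX_of_lt hN h0 h]; simp

lemma areaTerm_curls_X (hN : N = X + 2 * m + 1) (hm : 1 ≤ m) (hu : u < X) (hHu : H < u) :
    areaTerm N (curlsX X) (curlsY N X u H) X = u := by
  rw [areaTerm, step_curlsX_X hN hm, curlsY_apply_X hN hu hHu]; norm_num

lemma areaTerm_curls_of_odd (hN : N = X + 2 * m + 1) (hu : u < X) (hHu : H < u) {i : ℤ}
    (h : X < i) (h' : i + 1 < N) (hi : (i - X) % 2 = 1) :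
    areaTerm N (curlsX X) (curlsY N X u H) i = -2 * (i + 1) := by
  rw [areaTerm, step_curlsX_of_odd h h' hi, curlsY_apply_of_lt hN hu hHu h h']
  simp only [curlsX, if_neg (show ¬ i ≤ X by omega), if_pos hi]
  push_cast; ring

lemma areaTerm_curls_of_even (hN : N = X + 2 * m + 1) (hu : u < X) (hHu : H < u) {i : ℤ}
    (h : X < i) (h' : i + 1 < N) (hi : (i - X) % 2 = 0) :
    areaTerm N (curlsX X) (curlsY N X u H) i = 2 * (i - 1) := by
  rw [areaTerm, step_curlsX_of_even h h' hi, curlsY_apply_of_lt hN hu hHu h h']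
  simp only [curlsX, if_neg (show ¬ i ≤ X by omega), if_neg (show ¬ (i - X) % 2 = 1 by omega)]
  push_cast; ring

lemma areaTerm_curls_last (hN : N = X + 2 * m + 1) (hm : 1 ≤ m) (hu : u < X) (hHu : H < u) :
    areaTerm N (curlsX X) (curlsY N X u H) (N - 1) = (1 - N) * H := by
  rw [areaTerm, step_curlsX_last hN hm, curlsY_apply_last hN hm hu hHu]; push_cast; ring

lemma sum_areaTerm_curls (hN : N = X + 2 * m + 1) (hm : 1 ≤ m) (hu : u < X) (hHu : H < u) :
    ∑ i ∈ range N, areaTerm N (curlsX X) (curlsY N X u H) i =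
      u - 2 * m - 2 * N + 4 - (N - 1) * H := by
  obtain ⟨k, rfl⟩ : ∃ k, m = k + 1 := ⟨m - 1, by omega⟩
  have hpair : ∀ j ∈ range k, areaTerm N (curlsX X) (curlsY N X u H) (X + (2 * j + 1) : ℕ) +
      areaTerm N (curlsX X) (curlsY N X u H) (X + (2 * j + 1 + 1) : ℕ) = -2 := fun j hj => by
    have := mem_range.mp hj
    push_cast
    rw [areaTerm_curls_of_odd hN hu hHu (by omega) (by omega) (by omega),
      areaTerm_curls_of_even hN hu hHu (by omega) (by omega) (by omega)]
    push_cast; ring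
  rw [show range N = range (X + (2 * (k + 1) + 1)) by rw [hN, add_assoc], sum_range_add,
    sum_eq_zero fun i hi => areaTerm_curls_of_lt hN (by positivity) (by simpa using hi),
    sum_range_succ', sum_range_two_mul, sum_range_succ, sum_congr rfl hpair]
  push_cast
  rw [areaTerm_curls_of_odd hN hu hHu (by omega) (by omega) (by omega),
    show (X : ℤ) + (2 * k + 1 + 1) = N - 1 by omega, areaTerm_curls_last hN hm hu hHu, add_zero,
    areaTerm_curls_X hN hm hu hHu, sum_const, card_range, nsmul_eq_mul]
  subst hN; push_cast; ring

end Curls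

lemma exists_turningNumber_zero {s : ℕ} (hs : 1 ≤ s) :
    ∃ G : GridLoop (2 * s + 1), turningNumber G = 0 ∧ signedArea G = 0 := by
  have hN : ((2 * s + 1 : ℕ) : ℤ) = 2 * s + 1 := by push_cast; ring
  refine ⟨ofPerm _ (by omega) id (figureEightY _ s) (isPermOn_id _)
    (isPermOn_figureEightY hN (by omega)), ?_, ?_⟩
  · rw [turningNumber_ofPerm, sum_turnTerm_figureEight hN (by omega)]; simp
  · rw [signedArea_ofPerm, sum_areaTerm_figureEight hN (by omega)]; push_cast; ring

lemma exists_turningNumber_pos {s m : ℕ} (hm : 1 ≤ m) (hs : 4 * m ≤ s) :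
    ∃ G : GridLoop (2 * s + 1), turningNumber G = m ∧ signedArea G = 0 := by
  have hN : 2 * s + 1 = (2 * s - 2 * m) + 2 * m + 1 := by omega
  have hu : (s : ℤ) + 2 * m - 2 < (2 * s - 2 * m : ℕ) := by omega
  have hHu : (s : ℤ) - 1 < s + 2 * m - 2 := by omega
  refine ⟨ofPerm _ (by omega) _ _ (isPermOn_curlsX hN)
    (isPermOn_curlsY hN hm (by omega) hu hHu), ?_, ?_⟩
  · rw [turningNumber_ofPerm, sum_turnTerm_curls hN hm (by omega) hu hHu]; push_cast; ring
  · rw [signedArea_ofPerm, sum_areaTerm_curls hN hm hu hHu]; push_cast; ring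

lemma exists_turningNumber {s : ℕ} (t : ℤ) (hs : 1 ≤ s) (ht : 4 * t.natAbs ≤ s) :
    ∃ G : GridLoop (2 * s + 1), turningNumber G = t ∧ signedArea G = 0 := by
  rcases lt_trichotomy t 0 with h | rfl | h
  · obtain ⟨G, hG, hA⟩ := exists_turningNumber_pos (s := s) (m := t.natAbs) (by omega) ht
    refine ⟨G.reflect, ?_, by rw [signedArea_reflect, hA, neg_zero]⟩
    rw [turningNumber_reflect, hG, Nat.cast_natAbs, abs_of_neg h]; push_cast; ring
  · exact exists_turningNumber_zero hs
  · obtain ⟨G, hG, hA⟩ := exists_turningNumber_pos (s := s) (m := t.natAbs) (by omega) ht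
    exact ⟨G, by rw [hG, Nat.cast_natAbs, abs_of_pos h], hA⟩

end GridLoop

theorem turning_numbers_realized_general
    (m k : ℤ) :
    ∃ (n : ℕ) (G₁ G₂ : GridLoop n),
      turningNumber G₁ = (m : ℚ) ∧ turningNumber G₂ = (k : ℚ) ∧
      signedArea G₁ = 0 ∧ signedArea G₂ = 0 := by
  have hs : 1 ≤ 4 * max m.natAbs k.natAbs + 1 := by omega
  obtain ⟨G₁, h₁, a₁⟩ := GridLoop.exists_turningNumber m hs (by omega)
  obtain ⟨G₂, h₂, a₂⟩ := GridLoop.exists_turningNumber k hs (by omega)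
  exact ⟨_, G₁, G₂, h₁, h₂, a₁, a₂⟩

/-- For any pair of integers `(m, k)` (and any `M > 0`), there exist axis-parallel
polygonal grid loops `G₁, G₂` of a common grid size `n` with turning numbers `m` and `k`
respectively, each satisfying the zero signed-area condition `Σᵢ σᵢ·yᵢ·ℓᵢ = 0`. -/
theorem turning_numbers_realized
    (m k : ℤ) (M : ℝ) (hM : 0 < M) :
    ∃ (n : ℕ) (G₁ G₂ : GridLoop n),
      turningNumber G₁ = (m : ℚ) ∧ turningNumber G₂ = (k : ℚ) ∧
      signedArea G₁ = 0 ∧ signedArea G₂ = 0 :=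
  turning_numbers_realized_general m k
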